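/- Let r be a graphon with η ≤ r ≤ 1−η on [0,1]^2 for some η > 0. There exist C > 0 and ε_0 ∈ (0,1) such that for all ε ∈ (0,ε_0) and all measurable symmetric Δ:[0,1]^2→[0,1] with ‖T_{1−Δ}‖ = 1−ε, one has I_r(1) − I_r(1−Δ) ≤ ε log(1/ε) + Cε; in particular C^1_r − ψ_r(1−ε) ≤ ε log(1/ε) + Cε. -/

import Mathlib

open MeasureTheory Real Filter Set Topology

noncomputable section

/-- The unit interval `[0,1]` as a subset of `ℝ`. -/
def UI : Set ℝ := Set.Icc 0 1

/-- A graphon: a symmetric measurable function `[0,1]² → [0,1]`. -/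
def IsGraphon (h : ℝ → ℝ → ℝ) : Prop :=
  Measurable (Function.uncurry h) ∧ (∀ x y, h x y = h y x) ∧
    ∀ x ∈ UI, ∀ y ∈ UI, h x y ∈ Set.Icc (0:ℝ) 1

/-- The operator norm of the integral operator `T_h` on `L²([0,1])` associated with a
symmetric bounded kernel `h`, expressed via its quadratic form. -/
def gOpNorm (h : ℝ → ℝ → ℝ) : ℝ :=
  sSup {t : ℝ | ∃ u : ℝ → ℝ, Measurable u ∧ IntegrableOn (fun x => u x ^ 2) UI ∧
    (∫ x in UI, u x ^ 2) ≤ 1 ∧ t = |∫ x in UI, ∫ y in UI, u x * h x y * u y|}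

/-- Relative entropy of Bernoulli(a) with respect to Bernoulli(b), with `0 log 0 = 0`. -/
def relEnt (a b : ℝ) : ℝ :=
  a * Real.log (a / b) + (1 - a) * Real.log ((1 - a) / (1 - b))

/-- The rate function `I_r(h) = ∫∫ R(h(x,y) | r(x,y)) dx dy`. -/
def Ient (r h : ℝ → ℝ → ℝ) : ℝ := ∫ x in UI, ∫ y in UI, relEnt (h x y) (r x y)

/-- The rate function `ψ_r(β) = inf { I_r(h) : h graphon, ‖T_h‖ = β }`. -/
def psiRate (r : ℝ → ℝ → ℝ) (β : ℝ) : ℝ :=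
  sInf {c : ℝ | ∃ h : ℝ → ℝ → ℝ, IsGraphon h ∧ gOpNorm h = β ∧ Ient r h = c}

/-- The `L²([0,1]²)` norm of a kernel. -/
def L2norm2 (f : ℝ → ℝ → ℝ) : ℝ := Real.sqrt (∫ x in UI, ∫ y in UI, f x y ^ 2)

end

/-!
Let `v ≥ 0` with `‖v‖₂ ≤ 1` nearly attain the norm of `T_{1-Δ}`:
`⟨v, (1 - Δ) v⟩ > 1 - ε - ε²`. Since `⟨v, (1 - Δ) v⟩ + ⟨v, Δ v⟩ = (∫ v)² ≤ 1`, this forces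
`⟨v, Δ v⟩ ≤ ε + ε²` and `‖1 - v‖₂² ≤ 3ε`. For every kernel `K`,
`1 - v(x) v(y) = (1 - v(x)) + v(x) (1 - v(y))` and Cauchy–Schwarz give
`∫∫ K ≤ ⟨v, K v⟩ + 2 ‖1 - v‖₂ ‖K‖₂`. With `K = Δ` (and `Δ² ≤ Δ`) this yields `∫∫ Δ ≤ 15ε`.

Pointwise, `R(1|b) - R(1-a|b) ≤ (log η⁻¹ + 1) a + a log (max a ε)⁻¹ + ε`. The kernel
`W = Δ log (max Δ ε)⁻¹` satisfies `W ≤ log ε⁻¹ · Δ` and `W² ≤ 4Δ`, so the same inequality with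
`K = W` gives `∫∫ W ≤ log ε⁻¹ · ⟨v, Δ v⟩ + O(ε) ≤ ε log ε⁻¹ + O(ε)`: the leading constant `1`
comes from `⟨v, Δ v⟩ ≤ ε + ε²`, not from the cruder `∫∫ Δ = O(ε)`. The bound on `ψ_r(1 - ε)`
follows by applying this to `Δ = 1 - h` for every competitor `h`.
-/

open Function ProbabilityTheory

section Integrals

variable {α β : Type*} [MeasurableSpace α] [MeasurableSpace β] {μ : Measure α} {ν : Measure β}

theorem abs_integral_mul_le_sqrt_mul_sqrt {f g : α → ℝ} (hf : MemLp f 2 μ) (hg : MemLp g 2 μ) :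
    |∫ x, f x * g x ∂μ| ≤ √(∫ x, f x ^ 2 ∂μ) * √(∫ x, g x ^ 2 ∂μ) := by
  have holder := integral_mul_le_Lp_mul_Lq_of_nonneg Real.HolderConjugate.two_two
    (f := fun x => |f x|) (g := fun x => |g x|) (ae_of_all _ fun _ => abs_nonneg _)
    (ae_of_all _ fun _ => abs_nonneg _) (by rw [ENNReal.ofReal_ofNat]; exact hf.abs)
    (by rw [ENNReal.ofReal_ofNat]; exact hg.abs)
  simp only [Real.rpow_two, sq_abs] at holder
  calc |∫ x, f x * g x ∂μ| ≤ ∫ x, |f x * g x| ∂μ := abs_integral_le_integral_abs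
    _ ≤ _ := by simpa only [abs_mul, Real.sqrt_eq_rpow, one_div] using holder

theorem sq_integral_le_integral_sq [IsProbabilityMeasure μ] {f : α → ℝ} (hf : MemLp f 2 μ) :
    (∫ x, f x ∂μ) ^ 2 ≤ ∫ x, f x ^ 2 ∂μ := by
  have := variance_nonneg f μ
  rw [variance_eq_sub hf] at this
  simpa using this

theorem memLp_two_mul_prod [SFinite μ] [SFinite ν] {f : α → ℝ} {g : β → ℝ}
    (hf : MemLp f 2 μ) (hg : MemLp g 2 ν) :
    MemLp (fun p : α × β => f p.1 * g p.2) 2 (μ.prod ν) := by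
  refine (memLp_two_iff_integrable_sq (hf.1.comp_fst.mul hg.1.comp_snd)).2 ?_
  simpa only [Pi.mul_apply, mul_pow] using hf.integrable_sq.mul_prod hg.integrable_sq

theorem memLp_of_ae_mem_Icc [IsFiniteMeasure μ] {f : α → ℝ} {a b : ℝ} {p : ENNReal}
    (hf : AEStronglyMeasurable f μ) (hab : ∀ᵐ x ∂μ, f x ∈ Icc a b) : MemLp f p μ :=
  MemLp.of_bound hf (max |a| |b|) <| by
    filter_upwards [hab] with x hx using abs_le_max_abs_abs hx.1 hx.2

end Integrals

section RealInequalities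

variable {a b ε η t : ℝ}

theorem mul_log_sq_lt_four (ht : 0 < t) (ht1 : t ≤ 1) : t * log t ^ 2 < 4 := by
  have hs := abs_log_mul_self_lt (√t) (Real.sqrt_pos.2 ht) (Real.sqrt_le_one.2 ht1)
  have hlog : log t = 2 * log √t := by
    rw [Real.log_sqrt ht.le]; ring
  have hsq : (log √t * √t) ^ 2 < 1 := by
    simpa using (sq_lt_one_iff_abs_lt_one _).2 hs
  calc t * log t ^ 2 = 4 * (log √t * √t) ^ 2 := by
        rw [hlog, mul_pow, mul_pow, Real.sq_sqrt ht.le]; ring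
    _ < 4 := by linarith

theorem log_inv_nonneg_of_le_one (ht : 0 < t) (ht1 : t ≤ 1) : 0 ≤ log t⁻¹ :=
  Real.log_nonneg (one_le_inv₀ ht |>.2 ht1)

theorem mul_log_inv_max_nonneg (ha : 0 ≤ a) (ha1 : a ≤ 1) (hε : 0 < ε) (hε1 : ε ≤ 1) :
    0 ≤ a * log (max a ε)⁻¹ :=
  mul_nonneg ha (log_inv_nonneg_of_le_one (hε.trans_le (le_max_right _ _)) (max_le ha1 hε1))

theorem mul_log_inv_max_le (ha : 0 ≤ a) (hε : 0 < ε) :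
    a * log (max a ε)⁻¹ ≤ a * log ε⁻¹ :=
  mul_le_mul_of_nonneg_left (Real.log_le_log (by positivity)
    (inv_anti₀ hε (le_max_right _ _))) ha

theorem sq_mul_log_inv_max_le (ha : 0 ≤ a) (ha1 : a ≤ 1) (hε : 0 < ε) (hε1 : ε ≤ 1) :
    (a * log (max a ε)⁻¹) ^ 2 ≤ 4 * a := by
  set m := max a ε
  have hm : 0 < m := hε.trans_le (le_max_right _ _)
  have hfour := mul_log_sq_lt_four hm (max_le ha1 hε1)
  rw [Real.log_inv, mul_neg, neg_sq]
  calc (a * log m) ^ 2 = a * (a * log m ^ 2) := by ring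
    _ ≤ a * (m * log m ^ 2) :=
        mul_le_mul_of_nonneg_left (mul_le_mul_of_nonneg_right (le_max_left _ _) (sq_nonneg _)) ha
    _ ≤ 4 * a := by nlinarith

theorem negMulLog_le_mul_log_inv_max_add (ha : 0 ≤ a) (hε : 0 < ε) :
    negMulLog a ≤ a * log (max a ε)⁻¹ + ε := by
  rcases le_total ε a with hεa | haε
  · rw [max_eq_left hεa, negMulLog, Real.log_inv]; linarith
  rcases ha.eq_or_lt with rfl | ha
  · simp [hε.le]
  -- `a log (ε / a) ≤ a (ε / a - 1) = ε - a`
  have h := mul_le_mul_of_nonneg_left (Real.log_le_sub_one_of_pos (div_pos hε ha)) ha.le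
  rw [max_eq_right haε, negMulLog, Real.log_inv, Real.log_div hε.ne' ha.ne'] at *
  field_simp at h
  nlinarith

theorem mul_log_inv_le_one_sub (ht : 0 ≤ t) : t * log t⁻¹ ≤ 1 - t := by
  simpa [negMulLog, Real.log_inv] using negMulLog_le_one_sub_self ht

theorem log_inv_mem_Icc (hη : 0 < η) (hb : b ∈ Icc η 1) : log b⁻¹ ∈ Icc 0 (log η⁻¹) :=
  ⟨log_inv_nonneg_of_le_one (hη.trans_le hb.1) hb.2,
    Real.log_le_log (inv_pos.2 (hη.trans_le hb.1)) (inv_anti₀ hη hb.1)⟩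

theorem relEnt_eq (hb0 : 0 < b) (hb1 : b < 1) :
    relEnt a b = a * log b⁻¹ + (1 - a) * log (1 - b)⁻¹ - binEntropy a := by
  rw [relEnt, binEntropy]
  rcases eq_or_ne a 0 with rfl | ha
  · simp
  rcases eq_or_ne a 1 with rfl | ha1
  · simp
  rw [Real.log_div ha hb0.ne', Real.log_div (sub_ne_zero.2 (Ne.symm ha1)) (sub_pos.2 hb1).ne',
    Real.log_inv, Real.log_inv, Real.log_inv, Real.log_inv]
  ring

theorem abs_relEnt_le (hη : 0 < η) (ha : a ∈ Icc 0 1) (hb : b ∈ Icc η (1 - η)) :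
    |relEnt a b| ≤ log 2 + log η⁻¹ := by
  have hb1 := log_inv_mem_Icc hη ⟨hb.1, by linarith [hb.2]⟩
  have hb2 := log_inv_mem_Icc hη (b := 1 - b) ⟨by linarith [hb.2], by linarith [hb.1]⟩
  have hH := binEntropy_nonneg ha.1 ha.2
  have hH2 := binEntropy_le_log_two (p := a)
  rw [relEnt_eq (by linarith [hb.1]) (by linarith [hb.2]), abs_le]
  constructor <;> nlinarith [ha.1, ha.2, hb1.1, hb1.2, hb2.1, hb2.2]

theorem relEnt_one_sub_relEnt_le (hη : 0 < η) (ha : a ∈ Icc 0 1) (hb : b ∈ Icc η (1 - η))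
    (hε : 0 < ε) :
    relEnt 1 b - relEnt (1 - a) b ≤ (log η⁻¹ + 1) * a + a * log (max a ε)⁻¹ + ε := by
  have hb1 := log_inv_mem_Icc hη ⟨hb.1, by linarith [hb.2]⟩
  have hb2 := log_inv_mem_Icc hη (b := 1 - b) ⟨by linarith [hb.2], by linarith [hb.1]⟩
  have hent : binEntropy a ≤ a * log (max a ε)⁻¹ + ε + a := by
    rw [binEntropy_eq_negMulLog_add_negMulLog_one_sub]
    have := negMulLog_le_one_sub_self (sub_nonneg.2 ha.2)
    linarith [negMulLog_le_mul_log_inv_max_add ha.1 hε]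
  rw [relEnt_eq (by linarith [hb.1]) (by linarith [hb.2]),
    relEnt_eq (by linarith [hb.1]) (by linarith [hb.2]), binEntropy_one, binEntropy_one_sub]
  nlinarith [ha.1, hb1.1, hb1.2, hb2.1]

end RealInequalities

section QuadForm

variable {α : Type*} [MeasurableSpace α] {μ : Measure α}

noncomputable def quadForm (μ : Measure α) (K : α × α → ℝ) (v : α → ℝ) : ℝ :=
  ∫ p, v p.1 * K p * v p.2 ∂μ.prod μ

variable {K L : α × α → ℝ} {v : α → ℝ}

theorem integrable_quadForm [SFinite μ] (hK : MemLp K 2 (μ.prod μ)) (hv : MemLp v 2 μ) :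
    Integrable (fun p => v p.1 * K p * v p.2) (μ.prod μ) :=
  (hK.integrable_mul (memLp_two_mul_prod hv hv)).congr
    (ae_of_all _ fun p => by simp only [Pi.mul_apply]; ring)

theorem quadForm_mono [SFinite μ] (hK : MemLp K 2 (μ.prod μ)) (hL : MemLp L 2 (μ.prod μ))
    (hv : MemLp v 2 μ) (hv0 : 0 ≤ v) (hKL : K ≤ᵐ[μ.prod μ] L) :
    quadForm μ K v ≤ quadForm μ L v :=
  integral_mono_ae (integrable_quadForm hK hv) (integrable_quadForm hL hv) <| by
    filter_upwards [hKL] with p hp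
    exact mul_le_mul_of_nonneg_right (mul_le_mul_of_nonneg_left hp (hv0 _)) (hv0 _)

theorem quadForm_const_mul (c : ℝ) : quadForm μ (fun p => c * K p) v = c * quadForm μ K v := by
  simp only [quadForm]
  rw [← integral_const_mul]
  congr 1 with p
  ring

variable [IsProbabilityMeasure μ]

theorem quadForm_add_quadForm_one_sub (hK : MemLp K 2 (μ.prod μ)) (hv : MemLp v 2 μ) :
    quadForm μ K v + quadForm μ (fun p => 1 - K p) v = (∫ x, v x ∂μ) ^ 2 := by
  have hK' : Integrable (fun p => v p.1 * (1 - K p) * v p.2) (μ.prod μ) :=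
    integrable_quadForm ((memLp_const 1).sub hK) hv
  rw [quadForm, quadForm, ← integral_add (integrable_quadForm hK hv) hK', sq,
    ← integral_prod_mul]
  congr 1 with p
  ring

theorem integral_sub_quadForm_le (hK : MemLp K 2 (μ.prod μ)) (hv : MemLp v 2 μ)
    (hv1 : ∫ x, v x ^ 2 ∂μ ≤ 1) :
    ∫ p, K p ∂μ.prod μ - quadForm μ K v
      ≤ 2 * √(∫ x, (1 - v x) ^ 2 ∂μ) * √(∫ p, K p ^ 2 ∂μ.prod μ) := by
  set w : α → ℝ := fun x => 1 - v x
  have hw : MemLp w 2 μ := (memLp_const 1).sub hv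
  have hw₁ : MemLp (fun p : α × α => w p.1) 2 (μ.prod μ) := by
    simpa using memLp_two_mul_prod hw (memLp_const (1 : ℝ) (μ := μ))
  have hvw : MemLp (fun p : α × α => v p.1 * w p.2) 2 (μ.prod μ) := memLp_two_mul_prod hv hw
  have hsplit : ∫ p, K p ∂μ.prod μ - quadForm μ K v
      = ∫ p, K p * w p.1 ∂μ.prod μ + ∫ p, K p * (v p.1 * w p.2) ∂μ.prod μ := by
    have i₁ : Integrable (fun p => K p * w p.1) (μ.prod μ) := hK.integrable_mul hw₁
    have i₂ : Integrable (fun p => K p * (v p.1 * w p.2)) (μ.prod μ) := hK.integrable_mul hvw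
    rw [quadForm, ← integral_sub (hK.integrable one_le_two) (integrable_quadForm hK hv),
      ← integral_add i₁ i₂]
    congr 1 with p
    simp only [w]
    ring
  have hw₁sq : ∫ p, w p.1 ^ 2 ∂μ.prod μ = ∫ x, w x ^ 2 ∂μ := by
    simp [integral_fun_fst (fun x => w x ^ 2)]
  have hvwsq : ∫ p, (v p.1 * w p.2) ^ 2 ∂μ.prod μ ≤ ∫ x, w x ^ 2 ∂μ := by
    simp only [mul_pow]
    rw [integral_prod_mul (fun x => v x ^ 2) (fun x => w x ^ 2)]
    exact mul_le_of_le_one_left (integral_nonneg fun _ => sq_nonneg _) hv1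
  have h₁ := abs_integral_mul_le_sqrt_mul_sqrt hK hw₁
  have h₂ := abs_integral_mul_le_sqrt_mul_sqrt hK hvw
  rw [hw₁sq] at h₁
  have h₂' := h₂.trans (mul_le_mul_of_nonneg_left (Real.sqrt_le_sqrt hvwsq) (Real.sqrt_nonneg _))
  rw [hsplit]
  nlinarith [le_abs_self (∫ p, K p * w p.1 ∂μ.prod μ),
    le_abs_self (∫ p, K p * (v p.1 * w p.2) ∂μ.prod μ)]

end QuadForm

section NearTopVector

variable {α : Type*} [MeasurableSpace α] {μ : Measure α} [IsProbabilityMeasure μ]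
  {Δ : α × α → ℝ} {v : α → ℝ} {ε : ℝ}

theorem quadForm_le_of_gap (hΔ : AEMeasurable Δ (μ.prod μ))
    (hΔ01 : ∀ᵐ p ∂μ.prod μ, Δ p ∈ Icc 0 1) (hv : MemLp v 2 μ)
    (hv1 : ∫ x, v x ^ 2 ∂μ ≤ 1) (hgap : 1 - ε - ε ^ 2 < quadForm μ (fun p => 1 - Δ p) v) :
    quadForm μ Δ v ≤ ε + ε ^ 2 := by
  have hid := quadForm_add_quadForm_one_sub (memLp_of_ae_mem_Icc hΔ.aestronglyMeasurable hΔ01) hv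
  linarith [sq_integral_le_integral_sq hv]

theorem integral_one_sub_sq_le_of_gap (hΔ : AEMeasurable Δ (μ.prod μ))
    (hΔ01 : ∀ᵐ p ∂μ.prod μ, Δ p ∈ Icc 0 1) (hv : MemLp v 2 μ) (hv0 : 0 ≤ v)
    (hv1 : ∫ x, v x ^ 2 ∂μ ≤ 1) (hgap : 1 - ε - ε ^ 2 < quadForm μ (fun p => 1 - Δ p) v)
    (hε0 : 0 ≤ ε) (hε : ε ≤ 1 / 2) :
    ∫ x, (1 - v x) ^ 2 ∂μ ≤ 3 * ε := by
  have hid := quadForm_add_quadForm_one_sub (memLp_of_ae_mem_Icc hΔ.aestronglyMeasurable hΔ01) hv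
  have hQ : 0 ≤ quadForm μ Δ v := integral_nonneg_of_ae <| by
    filter_upwards [hΔ01] with p hp using mul_nonneg (mul_nonneg (hv0 _) hp.1) (hv0 _)
  have hm0 : 0 ≤ ∫ x, v x ∂μ := integral_nonneg hv0
  have hm2 := sq_integral_le_integral_sq hv
  have hvi : Integrable v μ := hv.integrable one_le_two
  have hexp : ∫ x, (1 - v x) ^ 2 ∂μ = 1 - 2 * ∫ x, v x ∂μ + ∫ x, v x ^ 2 ∂μ := by
    have i₁ : Integrable (fun x => 1 - 2 * v x) μ := (integrable_const 1).sub (hvi.const_mul 2)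
    calc ∫ x, (1 - v x) ^ 2 ∂μ = ∫ x, (1 - 2 * v x + v x ^ 2) ∂μ := by
          congr 1 with x; ring
      _ = _ := by
          rw [integral_add i₁ hv.integrable_sq, integral_sub (integrable_const 1)
            (hvi.const_mul 2), integral_const_mul]
          simp
  nlinarith

theorem integral_le_of_gap (hΔ : AEMeasurable Δ (μ.prod μ))
    (hΔ01 : ∀ᵐ p ∂μ.prod μ, Δ p ∈ Icc 0 1) (hv : MemLp v 2 μ) (hv0 : 0 ≤ v)
    (hv1 : ∫ x, v x ^ 2 ∂μ ≤ 1) (hgap : 1 - ε - ε ^ 2 < quadForm μ (fun p => 1 - Δ p) v)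
    (hε0 : 0 ≤ ε) (hε : ε ≤ 1 / 2) :
    ∫ p, Δ p ∂μ.prod μ ≤ 15 * ε := by
  have hΔL := memLp_of_ae_mem_Icc (p := 2) hΔ.aestronglyMeasurable hΔ01
  have hmaster := integral_sub_quadForm_le hΔL hv hv1
  have hQ := quadForm_le_of_gap hΔ hΔ01 hv hv1 hgap
  have hT := integral_one_sub_sq_le_of_gap hΔ hΔ01 hv hv0 hv1 hgap hε0 hε
  have hsq : ∫ p, Δ p ^ 2 ∂μ.prod μ ≤ ∫ p, Δ p ∂μ.prod μ :=
    integral_mono_ae hΔL.integrable_sq (hΔL.integrable one_le_two) <| by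
      filter_upwards [hΔ01] with p hp
      nlinarith [hp.1, hp.2]
  set d := ∫ p, Δ p ∂μ.prod μ
  have hd0 : 0 ≤ d := integral_nonneg_of_ae <| by filter_upwards [hΔ01] with p hp using hp.1
  have hprod : √(∫ x, (1 - v x) ^ 2 ∂μ) * √(∫ p, Δ p ^ 2 ∂μ.prod μ) ≤ √(3 * ε) * √d :=
    mul_le_mul (Real.sqrt_le_sqrt hT) (Real.sqrt_le_sqrt hsq) (Real.sqrt_nonneg _)
      (Real.sqrt_nonneg _)
  -- with `s = √d` and `t = √(3ε)`: `s² ≤ ε + ε² + 2ts`, which forces `s² ≤ 15ε`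
  have hs := Real.sq_sqrt hd0
  have ht := Real.sq_sqrt (by positivity : 0 ≤ 3 * ε)
  nlinarith [sq_nonneg (√d - 2 * √(3 * ε)), Real.sqrt_nonneg d, Real.sqrt_nonneg (3 * ε)]

theorem memLp_mul_log_inv_max {β : Type*} [MeasurableSpace β] {ν : Measure β}
    [IsFiniteMeasure ν] {f : β → ℝ} {p : ENNReal} (hf : AEMeasurable f ν)
    (hf01 : ∀ᵐ x ∂ν, f x ∈ Icc 0 1) (hε0 : 0 < ε) (hε1 : ε ≤ 1) :
    MemLp (fun x => f x * log (max (f x) ε)⁻¹) p ν :=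
  memLp_of_ae_mem_Icc (a := 0) (b := log ε⁻¹) (by fun_prop) <| hf01.mono fun _ hx =>
    ⟨mul_log_inv_max_nonneg hx.1 hx.2 hε0 hε1, (mul_log_inv_max_le hx.1 hε0).trans
      (mul_le_of_le_one_left (log_inv_nonneg_of_le_one hε0 hε1) hx.2)⟩

theorem quadForm_mul_log_inv_max_le (hΔ : AEMeasurable Δ (μ.prod μ))
    (hΔ01 : ∀ᵐ p ∂μ.prod μ, Δ p ∈ Icc 0 1) (hv : MemLp v 2 μ) (hv0 : 0 ≤ v) (hε0 : 0 < ε)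
    (hε1 : ε ≤ 1) :
    quadForm μ (fun p => Δ p * log (max (Δ p) ε)⁻¹) v ≤ log ε⁻¹ * quadForm μ Δ v := by
  rw [← quadForm_const_mul]
  refine quadForm_mono (memLp_mul_log_inv_max hΔ hΔ01 hε0 hε1)
    ((memLp_of_ae_mem_Icc hΔ.aestronglyMeasurable hΔ01).const_mul _) hv hv0 ?_
  filter_upwards [hΔ01] with p hp
  exact (mul_log_inv_max_le hp.1 hε0).trans_eq (mul_comm _ _)

theorem integral_sq_mul_log_inv_max_le (hΔ : AEMeasurable Δ (μ.prod μ))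
    (hΔ01 : ∀ᵐ p ∂μ.prod μ, Δ p ∈ Icc 0 1) (hε0 : 0 < ε) (hε1 : ε ≤ 1) :
    ∫ p, (Δ p * log (max (Δ p) ε)⁻¹) ^ 2 ∂μ.prod μ ≤ 4 * ∫ p, Δ p ∂μ.prod μ := by
  rw [← integral_const_mul]
  refine integral_mono_ae (memLp_mul_log_inv_max hΔ hΔ01 hε0 hε1).integrable_sq
    ((memLp_of_ae_mem_Icc (p := 1) hΔ.aestronglyMeasurable hΔ01).integrable le_rfl |>.const_mul 4)
    ?_
  filter_upwards [hΔ01] with p hp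
  exact sq_mul_log_inv_max_le hp.1 hp.2 hε0 hε1

theorem integral_mul_log_le_of_gap (hΔ : AEMeasurable Δ (μ.prod μ))
    (hΔ01 : ∀ᵐ p ∂μ.prod μ, Δ p ∈ Icc 0 1) (hv : MemLp v 2 μ) (hv0 : 0 ≤ v)
    (hv1 : ∫ x, v x ^ 2 ∂μ ≤ 1) (hgap : 1 - ε - ε ^ 2 < quadForm μ (fun p => 1 - Δ p) v)
    (hε0 : 0 < ε) (hε : ε ≤ 1 / 2) :
    ∫ p, Δ p * log (max (Δ p) ε)⁻¹ ∂μ.prod μ ≤ ε * log ε⁻¹ + 29 * ε := by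
  set W : α × α → ℝ := fun p => Δ p * log (max (Δ p) ε)⁻¹
  have hε1 : ε ≤ 1 := by linarith
  have hL0 := log_inv_nonneg_of_le_one hε0 hε1
  have hεL := mul_log_inv_le_one_sub hε0.le
  have hQW := (quadForm_mul_log_inv_max_le hΔ hΔ01 hv hv0 hε0 hε1).trans
    (mul_le_mul_of_nonneg_left (quadForm_le_of_gap hΔ hΔ01 hv hv1 hgap) hL0)
  have hW2 : ∫ p, W p ^ 2 ∂μ.prod μ ≤ 60 * ε := by
    linarith [integral_sq_mul_log_inv_max_le hΔ hΔ01 hε0 hε1,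
      integral_le_of_gap hΔ hΔ01 hv hv0 hv1 hgap hε0.le hε]
  have hT := integral_one_sub_sq_le_of_gap hΔ hΔ01 hv hv0 hv1 hgap hε0.le hε
  have herr : √(∫ x, (1 - v x) ^ 2 ∂μ) * √(∫ p, W p ^ 2 ∂μ.prod μ) ≤ 14 * ε := by
    rw [← Real.sqrt_mul (integral_nonneg fun _ => sq_nonneg _),
      ← Real.sqrt_sq (by positivity : 0 ≤ 14 * ε)]
    refine Real.sqrt_le_sqrt ?_
    calc _ ≤ 3 * ε * (60 * ε) :=
          mul_le_mul hT hW2 (integral_nonneg fun _ => sq_nonneg _) (by positivity)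
      _ ≤ (14 * ε) ^ 2 := by nlinarith
  have hmaster := integral_sub_quadForm_le (memLp_mul_log_inv_max hΔ hΔ01 hε0 hε1) hv hv1
  nlinarith

end NearTopVector

section UnitInterval

instance : IsProbabilityMeasure (volume.restrict UI) :=
  ⟨by simp [UI, Real.volume_Icc]⟩

theorem ae_restrict_UI_prod {P : ℝ → ℝ → Prop} (h : ∀ x ∈ UI, ∀ y ∈ UI, P x y) :
    ∀ᵐ p ∂(volume.restrict UI).prod (volume.restrict UI), P p.1 p.2 := by
  rw [Measure.prod_restrict]
  filter_upwards [ae_restrict_mem (measurableSet_Icc.prod measurableSet_Icc)] with p hp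
  exact h _ hp.1 _ hp.2

theorem memLp_uncurry_of_mem_Icc {F : ℝ → ℝ → ℝ} {a b : ℝ} {p : ENNReal}
    (hF : Measurable (uncurry F)) (hab : ∀ x ∈ UI, ∀ y ∈ UI, F x y ∈ Icc a b) :
    MemLp (uncurry F) p ((volume.restrict UI).prod (volume.restrict UI)) :=
  memLp_of_ae_mem_Icc hF.aestronglyMeasurable (ae_restrict_UI_prod hab)

theorem exists_quadForm_gt_of_lt_gOpNorm {K : ℝ → ℝ → ℝ} (hK : Measurable (uncurry K))
    (hK01 : ∀ x ∈ UI, ∀ y ∈ UI, K x y ∈ Icc 0 1) {t : ℝ} (ht : t < gOpNorm K) :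
    ∃ v : ℝ → ℝ, MemLp v 2 (volume.restrict UI) ∧ 0 ≤ v ∧ ∫ x in UI, v x ^ 2 ≤ 1 ∧
      t < quadForm (volume.restrict UI) (uncurry K) v := by
  obtain ⟨_, ⟨u, hu, hu2, hu1, rfl⟩, htu⟩ :=
    exists_lt_of_lt_csSup (by exact ⟨0, 0, measurable_const, by simp, by simp, by simp⟩) ht
  have huL : MemLp u 2 (volume.restrict UI) :=
    (memLp_two_iff_integrable_sq hu.aestronglyMeasurable).2 hu2
  have hKL := memLp_uncurry_of_mem_Icc (p := 2) hK hK01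
  have hprod : ∫ x in UI, ∫ y in UI, u x * K x y * u y
      = ∫ p, u p.1 * uncurry K p * u p.2 ∂(volume.restrict UI).prod (volume.restrict UI) :=
    (integral_prod _ (integrable_quadForm hKL huL)).symm
  refine ⟨fun x => |u x|, huL.abs, fun x => abs_nonneg _, by simpa using hu1, htu.trans_le ?_⟩
  rw [hprod]
  refine abs_integral_le_integral_abs.trans (integral_mono_ae (integrable_quadForm hKL huL).abs
    (integrable_quadForm hKL huL.abs) ?_)
  filter_upwards [ae_restrict_UI_prod hK01] with p hp
  rw [abs_mul, abs_mul, abs_of_nonneg (show 0 ≤ uncurry K p from hp.1)]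

theorem gOpNorm_const {c : ℝ} (hc : 0 ≤ c) : gOpNorm (fun _ _ => c) = c := by
  refine IsGreatest.csSup_eq ⟨⟨fun _ => 1, measurable_const,
    (integrable_const (1 : ℝ)).congr (by simp), by simp, ?_⟩, ?_⟩
  · simp [abs_of_nonneg hc]
  rintro _ ⟨u, hu, hu2, hu1, rfl⟩
  have huL : MemLp u 2 (volume.restrict UI) :=
    (memLp_two_iff_integrable_sq hu.aestronglyMeasurable).2 hu2
  have hform : ∫ x in UI, ∫ y in UI, u x * c * u y = c * (∫ x in UI, u x) ^ 2 := by
    simp only [integral_const_mul, integral_mul_const]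
    ring
  rw [hform, abs_mul, abs_of_nonneg hc, abs_sq]
  exact mul_le_of_le_one_right hc ((sq_integral_le_integral_sq huL).trans hu1)

end UnitInterval

section RateFunction

variable {r : ℝ → ℝ → ℝ} {η ε : ℝ}

theorem measurable_relEnt : Measurable (uncurry relEnt) := by
  unfold relEnt
  fun_prop

theorem integrable_relEnt (hη : 0 < η) (hr : Measurable (uncurry r))
    (hrb : ∀ x ∈ UI, ∀ y ∈ UI, r x y ∈ Icc η (1 - η)) {h : ℝ → ℝ → ℝ}
    (hh : Measurable (uncurry h)) (hhb : ∀ x ∈ UI, ∀ y ∈ UI, h x y ∈ Icc 0 1) :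
    Integrable (fun p => relEnt (h p.1 p.2) (r p.1 p.2))
      ((volume.restrict UI).prod (volume.restrict UI)) :=
  Integrable.of_bound (measurable_relEnt.comp (hh.prodMk hr)).aestronglyMeasurable
    (log 2 + log η⁻¹) (ae_restrict_UI_prod fun x hx y hy =>
      (Real.norm_eq_abs _).trans_le (abs_relEnt_le hη (hhb x hx y hy) (hrb x hx y hy)))

theorem Ient_one_sub_Ient_le_integral (hη : 0 < η) (hr : Measurable (uncurry r))
    (hrb : ∀ x ∈ UI, ∀ y ∈ UI, r x y ∈ Icc η (1 - η)) (hε0 : 0 < ε) (hε1 : ε ≤ 1)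
    {Δ : ℝ → ℝ → ℝ} (hΔ : Measurable (uncurry Δ)) (hΔb : ∀ x ∈ UI, ∀ y ∈ UI, Δ x y ∈ Icc 0 1) :
    Ient r (fun _ _ => 1) - Ient r (fun x y => 1 - Δ x y)
      ≤ (log η⁻¹ + 1) * ∫ p, Δ p.1 p.2 ∂(volume.restrict UI).prod (volume.restrict UI)
        + (∫ p, Δ p.1 p.2 * log (max (Δ p.1 p.2) ε)⁻¹
            ∂(volume.restrict UI).prod (volume.restrict UI) + ε) := by
  set ν := (volume.restrict UI).prod (volume.restrict UI)
  have hΔi : Integrable (fun p => (log η⁻¹ + 1) * Δ p.1 p.2) ν :=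
    ((memLp_uncurry_of_mem_Icc (p := 1) hΔ hΔb).integrable le_rfl).const_mul _
  have hWi : Integrable (fun p => Δ p.1 p.2 * log (max (Δ p.1 p.2) ε)⁻¹) ν :=
    (memLp_mul_log_inv_max (p := 1) hΔ.aemeasurable (ae_restrict_UI_prod hΔb) hε0
      hε1).integrable le_rfl
  have hWεi : Integrable (fun p => Δ p.1 p.2 * log (max (Δ p.1 p.2) ε)⁻¹ + ε) ν :=
    hWi.add (integrable_const ε)
  have hI1 := integrable_relEnt hη hr hrb measurable_const fun _ _ _ _ => ⟨zero_le_one, le_rfl⟩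
  have hI2 := integrable_relEnt hη hr hrb (by exact measurable_const.sub hΔ) fun x hx y hy =>
    ⟨sub_nonneg.2 (hΔb x hx y hy).2, sub_le_self _ (hΔb x hx y hy).1⟩
  have hpoint : ∀ᵐ p ∂ν, relEnt 1 (r p.1 p.2) - relEnt (1 - Δ p.1 p.2) (r p.1 p.2)
      ≤ (log η⁻¹ + 1) * Δ p.1 p.2 + (Δ p.1 p.2 * log (max (Δ p.1 p.2) ε)⁻¹ + ε) := by
    filter_upwards [ae_restrict_UI_prod fun x hx y hy => And.intro (hΔb x hx y hy)
      (hrb x hx y hy)] with p hp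
    linarith [relEnt_one_sub_relEnt_le hη hp.1 hp.2 hε0]
  rw [Ient, Ient, ← integral_prod _ hI1, ← integral_prod _ hI2, ← integral_sub hI1 hI2]
  calc _ ≤ ∫ p, (log η⁻¹ + 1) * Δ p.1 p.2 + (Δ p.1 p.2 * log (max (Δ p.1 p.2) ε)⁻¹ + ε) ∂ν :=
        integral_mono_ae (hI1.sub hI2) (hΔi.add hWεi) hpoint
    _ = _ := by
        rw [integral_add hΔi hWεi, integral_add hWi (integrable_const ε), integral_const_mul]
        simp

theorem Ient_one_sub_Ient_le (hη : 0 < η) (hr : Measurable (uncurry r))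
    (hrb : ∀ x ∈ UI, ∀ y ∈ UI, r x y ∈ Icc η (1 - η)) (hε0 : 0 < ε) (hε : ε ≤ 1 / 2)
    {Δ : ℝ → ℝ → ℝ} (hΔ : Measurable (uncurry Δ)) (hΔb : ∀ x ∈ UI, ∀ y ∈ UI, Δ x y ∈ Icc 0 1)
    (hnorm : gOpNorm (fun x y => 1 - Δ x y) = 1 - ε) :
    Ient r (fun _ _ => 1) - Ient r (fun x y => 1 - Δ x y)
      ≤ ε * log ε⁻¹ + (15 * log η⁻¹ + 45) * ε := by
  obtain ⟨v, hv, hv0, hv1, hgap⟩ := exists_quadForm_gt_of_lt_gOpNorm (t := 1 - ε - ε ^ 2)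
    (by exact measurable_const.sub hΔ) (fun x hx y hy =>
      ⟨sub_nonneg.2 (hΔb x hx y hy).2, sub_le_self _ (hΔb x hx y hy).1⟩)
    (by rw [hnorm]; nlinarith)
  have hΔ01 := ae_restrict_UI_prod hΔb
  have hd : ∫ p, Δ p.1 p.2 ∂(volume.restrict UI).prod (volume.restrict UI) ≤ 15 * ε :=
    integral_le_of_gap hΔ.aemeasurable hΔ01 hv hv0 hv1 hgap hε0.le hε
  have hW : ∫ p, Δ p.1 p.2 * log (max (Δ p.1 p.2) ε)⁻¹
      ∂(volume.restrict UI).prod (volume.restrict UI) ≤ ε * log ε⁻¹ + 29 * ε :=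
    integral_mul_log_le_of_gap hΔ.aemeasurable hΔ01 hv hv0 hv1 hgap hε0 hε
  have hr00 := hrb 0 ⟨le_rfl, zero_le_one⟩ 0 ⟨le_rfl, zero_le_one⟩
  have hLη := log_inv_nonneg_of_le_one hη (by linarith [hr00.1, hr00.2])
  have hI := Ient_one_sub_Ient_le_integral hη hr hrb hε0 (by linarith) hΔ hΔb
  nlinarith

theorem Ient_one_sub_psiRate_le (hη : 0 < η)
    (hr : Measurable (uncurry r)) (hrb : ∀ x ∈ UI, ∀ y ∈ UI, r x y ∈ Icc η (1 - η))
    (hε0 : 0 < ε) (hε : ε ≤ 1 / 2) :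
    Ient r (fun _ _ => 1) - psiRate r (1 - ε) ≤ ε * log ε⁻¹ + (15 * log η⁻¹ + 45) * ε := by
  rw [sub_le_comm, psiRate]
  refine le_csInf ⟨_, fun _ _ => 1 - ε, ⟨measurable_const, fun _ _ => rfl,
    fun _ _ _ _ => ⟨by linarith, by linarith⟩⟩, gOpNorm_const (by linarith), rfl⟩ ?_
  rintro _ ⟨h, ⟨hh, -, hhb⟩, hnorm, rfl⟩
  have := Ient_one_sub_Ient_le hη hr hrb hε0 hε (Δ := fun x y => 1 - h x y)
    (by exact measurable_const.sub hh) (fun x hx y hy => ⟨by linarith [(hhb x hx y hy).2],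
      by linarith [(hhb x hx y hy).1]⟩) (by simpa only [sub_sub_cancel] using hnorm)
  simp only [sub_sub_cancel] at this
  linarith

end RateFunction

theorem cost_upper_bound_near_one_general
    (r : ℝ → ℝ → ℝ) (η : ℝ) (hη : 0 < η)
    (hrmeas : Measurable (Function.uncurry r))
    (hrbound : ∀ x ∈ UI, ∀ y ∈ UI, r x y ∈ Set.Icc η (1 - η)) :
    ∃ C > (0:ℝ), ∃ ε₀ ∈ Set.Ioo (0:ℝ) 1,
      (∀ ε ∈ Set.Ioo (0:ℝ) ε₀, ∀ Δ : ℝ → ℝ → ℝ,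
        Measurable (Function.uncurry Δ) → (∀ x y, Δ x y = Δ y x) →
        (∀ x ∈ UI, ∀ y ∈ UI, Δ x y ∈ Set.Icc (0:ℝ) 1) →
        gOpNorm (fun x y => 1 - Δ x y) = 1 - ε →
          Ient r (fun _ _ => 1) - Ient r (fun x y => 1 - Δ x y)
            ≤ ε * Real.log (1 / ε) + C * ε) ∧
      (∀ ε ∈ Set.Ioo (0:ℝ) ε₀,
        Ient r (fun _ _ => 1) - psiRate r (1 - ε) ≤ ε * Real.log (1 / ε) + C * ε) := by
  have hr00 := hrbound 0 ⟨le_rfl, zero_le_one⟩ 0 ⟨le_rfl, zero_le_one⟩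
  have hLη : 0 ≤ log (1 / η) := by
    rw [one_div]; exact log_inv_nonneg_of_le_one hη (by linarith [hr00.1, hr00.2])
  refine ⟨15 * log (1 / η) + 45, by positivity, 1 / 2, by norm_num, ?_, ?_⟩
  · intro ε hε Δ hΔ _ hΔb hnorm
    simpa only [one_div] using
      Ient_one_sub_Ient_le hη hrmeas hrbound hε.1 hε.2.le hΔ hΔb hnorm
  · intro ε hε
    simpa only [one_div] using Ient_one_sub_psiRate_le hη hrmeas hrbound hε.1 hε.2.le

/-- upper bound on the cost gain near β = 1:
I_r(1) − I_r(1−Δ) ≤ ε log(1/ε) + Cε, and C¹_r − ψ_r(1−ε) ≤ ε log(1/ε) + Cε. -/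
theorem cost_upper_bound_near_one
    (r : ℝ → ℝ → ℝ) (η : ℝ) (hη : 0 < η)
    (hrmeas : Measurable (Function.uncurry r))
    (hrsymm : ∀ x y, r x y = r y x)
    (hrbound : ∀ x ∈ UI, ∀ y ∈ UI, r x y ∈ Set.Icc η (1 - η)) :
    ∃ C > (0:ℝ), ∃ ε₀ ∈ Set.Ioo (0:ℝ) 1,
      (∀ ε ∈ Set.Ioo (0:ℝ) ε₀, ∀ Δ : ℝ → ℝ → ℝ,
        Measurable (Function.uncurry Δ) → (∀ x y, Δ x y = Δ y x) →
        (∀ x ∈ UI, ∀ y ∈ UI, Δ x y ∈ Set.Icc (0:ℝ) 1) →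
        gOpNorm (fun x y => 1 - Δ x y) = 1 - ε →
          Ient r (fun _ _ => 1) - Ient r (fun x y => 1 - Δ x y)
            ≤ ε * Real.log (1 / ε) + C * ε) ∧
      (∀ ε ∈ Set.Ioo (0:ℝ) ε₀,
        Ient r (fun _ _ => 1) - psiRate r (1 - ε) ≤ ε * Real.log (1 / ε) + C * ε) :=
  cost_upper_bound_near_one_general r η hη hrmeas hrbound
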